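/- Compatibility of weighted trace with local unitary action: let K ⊂ J ⊆ {1,…,n} and let U = U₁⊗⋯⊗Uₙ be a local unitary on (ℂ^q)^{⊗n}; set U_J = ⊗_{j∈J}Uⱼ and U_K = ⊗_{j∈K}Uⱼ. Then for every function T : ((ℤ/qℤ)²)^J × ((ℤ/qℤ)²)^J → ℂ[z], Λ(U_K)(tr^J_K T) = tr^J_K(Λ(U_J) T). -/

import Mathlib

open Matrix Polynomial
open scoped BigOperators ComplexConjugate Kronecker

noncomputable section

/-- Generalized Pauli `X` (cyclic shift) on `ℂ^q`. -/
def Xmat (q : ℕ) : Matrix (Fin q) (Fin q) ℂ :=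
  fun i j => if (i : ℕ) = ((j : ℕ) + 1) % q then 1 else 0

/-- Generalized Pauli `Z` (clock) on `ℂ^q`, `Z|j⟩ = ζ^j |j⟩` with `ζ = exp(2πi/q)`. -/
def Zmat (q : ℕ) : Matrix (Fin q) (Fin q) ℂ :=
  Matrix.diagonal fun j => Complex.exp (2 * (Real.pi : ℂ) * Complex.I / (q : ℂ)) ^ (j : ℕ)

/-- Single-qudit Pauli `E(a,b) = X^a Z^b` for a label `(a,b) ∈ (ℤ/qℤ)²`. -/
def Epauli (q : ℕ) (p : ZMod q × ZMod q) : Matrix (Fin q) (Fin q) ℂ :=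
  Xmat q ^ p.1.val * Zmat q ^ p.2.val

/-- Multi-qudit Pauli `E(p) = E(p₁) ⊗ ⋯ ⊗ E(pₙ)` on the space indexed by `ι → Fin q`. -/
def EV (q : ℕ) {ι : Type} [Fintype ι] (p : ι → ZMod q × ZMod q) :
    Matrix (ι → Fin q) (ι → Fin q) ℂ :=
  fun v w => ∏ i, Epauli q (p i) (v i) (w i)

/-- Weight of a Pauli label vector: the number of non-identity factors. -/
def wtL (q : ℕ) {ι : Type} [Fintype ι] (p : ι → ZMod q × ZMod q) : ℕ :=
  (Finset.univ.filter fun i => p i ≠ 0).card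

/-- Kronecker (tensor) product of a family of local `q × q` matrices. -/
def kron (q : ℕ) {ι : Type} [Fintype ι] (Us : ι → Matrix (Fin q) (Fin q) ℂ) :
    Matrix (ι → Fin q) (ι → Fin q) ℂ :=
  fun v w => ∏ i, Us i (v i) (w i)

/-- Coefficients `c(g,e) = q^{-|ι|} · Tr(E(g)† V† E(e) V)` of the adjoint action. -/
def cCoef (q : ℕ) {ι : Type} [Fintype ι] [DecidableEq ι]
    (V : Matrix (ι → Fin q) (ι → Fin q) ℂ) (g e : ι → ZMod q × ZMod q) : ℂ :=
  ((q : ℂ) ^ Fintype.card ι)⁻¹ * Matrix.trace ((EV q g)ᴴ * Vᴴ * EV q e * V)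

/-- Adjoint ("Bloch-sphere") action `Λ(V)` on polynomial-valued tensors. -/
def Lam (q : ℕ) [NeZero q] {ι : Type} [Fintype ι] [DecidableEq ι]
    (V : Matrix (ι → Fin q) (ι → Fin q) ℂ)
    (T : (ι → ZMod q × ZMod q) → (ι → ZMod q × ZMod q) → Polynomial ℂ)
    (e e' : ι → ZMod q × ZMod q) : Polynomial ℂ :=
  ∑ g, ∑ g', Polynomial.C ((starRingEnd ℂ) (cCoef q V g e) * cCoef q V g' e') * T g g'

/-- Weighted trace `tr^J_K` taking a `J`-legged tensor enumerator to a `K`-legged one. -/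
def trJK (q : ℕ) [NeZero q] {ι : Type} [Fintype ι] [DecidableEq ι] {J : Finset ι}
    (K : Finset ι) (hKJ : K ⊆ J)
    (T : ({j // j ∈ J} → ZMod q × ZMod q) → ({j // j ∈ J} → ZMod q × ZMod q) →
      Polynomial ℂ)
    (f f' : {j // j ∈ K} → ZMod q × ZMod q) : Polynomial ℂ :=
  ∑ e : {j // j ∈ J \ K} → ZMod q × ZMod q,
    Polynomial.X ^ wtL q e *
      T (fun j => if h : j.val ∈ K then f ⟨j.val, h⟩
            else e ⟨j.val, Finset.mem_sdiff.mpr ⟨j.2, h⟩⟩)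
        (fun j => if h : j.val ∈ K then f' ⟨j.val, h⟩
            else e ⟨j.val, Finset.mem_sdiff.mpr ⟨j.2, h⟩⟩)

/-!
Write `c_I(g, e)` for `cCoef` of `⊗_{j ∈ I} U_j`. For a local unitary it factors over the sites,
`c_J(a ⊗ b, f ⊗ c) = c_K(a, f) · c_{J∖K}(b, c)`. Expanded with this, both sides agree term by term
in `a, a', b, b'`, except that the right side carries the extra factor
`Σ_c z^{wt c} · conj (c_{J∖K}(b, c)) · c_{J∖K}(b', c)`, which equals `δ_{b b'} z^{wt b}`.
That identity factors over the sites as well. On one site write `z^{wt p} = z + (1 - z)·[p = 0]`: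
the rows of the Pauli transfer matrix `c(·, ·)` of a unitary are orthonormal (Parseval for the
Pauli basis, which is orthogonal with `q²` elements, hence complete), and its column at `p = 0`
is `δ_{a 0}`.
-/

lemma trace_conjTranspose_mul_eq_sum {n : Type*} [Fintype n] (A B : Matrix n n ℂ) :
    trace (Aᴴ * B) = ∑ j, ∑ k, conj (A k j) * B k j := by
  simp [trace, mul_apply]

lemma Epauli_zero {q : ℕ} : Epauli q 0 = 1 := by
  simp [Epauli]

section Pauli
variable {q : ℕ} [NeZero q]

local notation "φ" => ZMod.finEquiv q
local notation "ψ" => (ZMod.stdAddChar : AddChar (ZMod q) ℂ)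

lemma finEquiv_eq_natCast (i : Fin q) : φ i = ((i : ℕ) : ZMod q) := by
  cases q with
  | zero => exact absurd rfl (NeZero.ne 0)
  | succ n => exact (ZMod.natCast_zmod_val (n := n + 1) i).symm

lemma sum_fin_eq_sum_zmod {M : Type*} [AddCommMonoid M] (F : ZMod q → M) :
    ∑ i : Fin q, F (φ i) = ∑ x, F x :=
  (φ).toEquiv.sum_comp F

lemma Xmat_apply (i j : Fin q) : Xmat q i j = if φ i = φ j + 1 then 1 else 0 := by
  simp only [Xmat, finEquiv_eq_natCast, ← Nat.cast_add_one, ZMod.natCast_eq_natCast_iff',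
    Nat.mod_eq_of_lt i.isLt]

lemma Xmat_pow_apply (m : ℕ) (i j : Fin q) :
    (Xmat q ^ m) i j = if φ i = φ j + m then 1 else 0 := by
  induction m generalizing i with
  | zero => simp only [pow_zero, Nat.cast_zero, add_zero, Matrix.one_apply, (φ).injective.eq_iff]
  | succ m ih =>
    simp only [pow_succ', Matrix.mul_apply, Xmat_apply, ih, mul_ite, mul_one, mul_zero]
    rw [sum_fin_eq_sum_zmod
      (fun x => if x = φ j + (m : ZMod q) then if φ i = x + 1 then (1 : ℂ) else 0 else 0)]
    simp only [Finset.sum_ite_eq', Finset.mem_univ, if_true, Nat.cast_succ, add_assoc]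

open Complex in
lemma zeta_pow_eq_stdAddChar (m : ℕ) :
    exp (2 * (Real.pi : ℂ) * I / q) ^ m = ψ (m : ZMod q) := by
  rw [ZMod.stdAddChar_apply, ZMod.toCircle_natCast, ← Complex.exp_nat_mul]
  ring_nf

lemma Epauli_apply (p : ZMod q × ZMod q) (i j : Fin q) :
    Epauli q p i j = if φ i = φ j + p.1 then ψ (φ j * p.2) else 0 := by
  rw [Epauli, Zmat, diagonal_pow, mul_diagonal, Xmat_pow_apply, ite_mul, one_mul, zero_mul,
    ZMod.natCast_zmod_val, Pi.pow_apply, ← pow_mul, zeta_pow_eq_stdAddChar, Nat.cast_mul,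
    ZMod.natCast_zmod_val, finEquiv_eq_natCast j]

lemma conj_stdAddChar_mul (x y : ZMod q) : conj (ψ x) * ψ y = ψ (y - x) := by
  rw [← AddChar.map_neg_eq_conj, ← AddChar.map_add_eq_mul, neg_add_eq_sub]

lemma trace_conjTranspose_Epauli_mul (a b : ZMod q × ZMod q) :
    trace ((Epauli q a)ᴴ * Epauli q b) = if a = b then (q : ℂ) else 0 := by
  have hcol : ∀ j : Fin q, ∑ k, conj (Epauli q a k j) * Epauli q b k j
      = if a.1 = b.1 then ψ (φ j * (b.2 - a.2)) else 0 := by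
    intro j
    simp only [Epauli_apply, apply_ite conj, map_zero, ite_mul, mul_ite, zero_mul, mul_zero]
    rw [sum_fin_eq_sum_zmod (fun y => if y = φ j + b.1 then if y = φ j + a.1 then
      conj (ψ (φ j * a.2)) * ψ (φ j * b.2) else 0 else 0)]
    simp only [Finset.sum_ite_eq', Finset.mem_univ, if_true, add_right_inj, eq_comm (a := b.1),
      conj_stdAddChar_mul, mul_sub]
  rw [trace_conjTranspose_mul_eq_sum, Finset.sum_congr rfl fun j _ => hcol j,
    sum_fin_eq_sum_zmod (fun x => if a.1 = b.1 then ψ (x * (b.2 - a.2)) else 0),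
    Finset.sum_ite_irrel, AddChar.sum_mulShift _ (ZMod.isPrimitive_stdAddChar q), ZMod.card]
  by_cases h1 : a.1 = b.1 <;> by_cases h2 : a.2 = b.2 <;>
    simp [h1, h2, Prod.ext_iff, sub_eq_zero, eq_comm]

end Pauli

def pauliFrame (q : ℕ) : Matrix (Fin q × Fin q) (ZMod q × ZMod q) ℂ :=
  fun r p => Epauli q p r.1 r.2

section Frame
variable {q : ℕ} [NeZero q]

lemma conjTranspose_pauliFrame_mul : (pauliFrame q)ᴴ * pauliFrame q = (q : ℂ) • 1 := by
  ext a b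
  rw [mul_apply, Matrix.smul_apply, one_apply, smul_eq_mul, mul_ite, mul_one, mul_zero,
    ← trace_conjTranspose_Epauli_mul, trace_conjTranspose_mul_eq_sum, Finset.sum_comm,
    Fintype.sum_prod_type]
  rfl

-- The frame is square, so its left inverse is also a right inverse.
lemma pauliFrame_mul_conjTranspose : pauliFrame q * (pauliFrame q)ᴴ = (q : ℂ) • 1 := by
  have hq : (q : ℂ) ≠ 0 := Nat.cast_ne_zero.mpr (NeZero.ne q)
  let e := (ZMod.finEquiv q).toEquiv.prodCongr (ZMod.finEquiv q).toEquiv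
  have h : ((q : ℂ)⁻¹ • (pauliFrame q)ᴴ) * pauliFrame q = 1 := by
    rw [smul_mul, conjTranspose_pauliFrame_mul, smul_smul, inv_mul_cancel₀ hq, one_smul]
  replace h := (mul_eq_one_comm_of_equiv e.symm).mp h
  rw [Matrix.mul_smul] at h
  rw [← h, smul_smul, mul_inv_cancel₀ hq, one_smul]

lemma sum_trace_mul_Epauli_mul_trace (A B : Matrix (Fin q) (Fin q) ℂ) :
    ∑ p, trace (A * Epauli q p) * trace ((Epauli q p)ᴴ * B) = q * trace (A * B) := by
  let x : Fin q × Fin q → ℂ := fun r => A r.2 r.1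
  let y : Fin q × Fin q → ℂ := fun r => B r.1 r.2
  have hA : ∀ p, trace (A * Epauli q p) = (x ᵥ* pauliFrame q) p := by
    intro p
    simp only [trace, diag, mul_apply, vecMul, dotProduct, Fintype.sum_prod_type]
    rw [Finset.sum_comm]
    rfl
  have hB : ∀ p, trace ((Epauli q p)ᴴ * B) = ((pauliFrame q)ᴴ *ᵥ y) p := by
    intro p
    simp only [trace, diag, mul_apply, mulVec, dotProduct, Fintype.sum_prod_type]
    rw [Finset.sum_comm]
    rfl
  have hAB : trace (A * B) = x ⬝ᵥ y := by
    simp only [trace, diag, mul_apply, dotProduct, Fintype.sum_prod_type]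
    rw [Finset.sum_comm]
  simp only [hA, hB, hAB]
  change (x ᵥ* pauliFrame q) ⬝ᵥ ((pauliFrame q)ᴴ *ᵥ y) = _
  rw [← dotProduct_mulVec, mulVec_mulVec, pauliFrame_mul_conjTranspose, smul_mulVec, one_mulVec,
    dotProduct_smul, smul_eq_mul]

end Frame

def pauliTransfer (q : ℕ) (U : Matrix (Fin q) (Fin q) ℂ) (a b : ZMod q × ZMod q) : ℂ :=
  (q : ℂ)⁻¹ * trace ((Epauli q a)ᴴ * Uᴴ * Epauli q b * U)

section Transfer
variable {q : ℕ} [NeZero q]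

lemma pauliTransfer_zero_right {U : Matrix (Fin q) (Fin q) ℂ} (hU : U ∈ unitaryGroup (Fin q) ℂ)
    (a : ZMod q × ZMod q) : pauliTransfer q U a 0 = if a = 0 then 1 else 0 := by
  have hq : (q : ℂ) ≠ 0 := Nat.cast_ne_zero.mpr (NeZero.ne q)
  have hUU : Uᴴ * U = 1 := mem_unitaryGroup_iff'.mp hU
  rw [pauliTransfer, Epauli_zero, Matrix.mul_one, Matrix.mul_assoc, hUU, ← Epauli_zero,
    trace_conjTranspose_Epauli_mul]
  split_ifs <;> simp [hq]

lemma sum_conj_pauliTransfer_mul {U : Matrix (Fin q) (Fin q) ℂ}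
    (hU : U ∈ unitaryGroup (Fin q) ℂ) (a a' : ZMod q × ZMod q) :
    ∑ p, conj (pauliTransfer q U a p) * pauliTransfer q U a' p = if a = a' then 1 else 0 := by
  have hq : (q : ℂ) ≠ 0 := Nat.cast_ne_zero.mpr (NeZero.ne q)
  have hUU : Uᴴ * U = 1 := mem_unitaryGroup_iff'.mp hU
  have hconj : ∀ p, conj (pauliTransfer q U a p)
      = (q : ℂ)⁻¹ * trace ((Epauli q p)ᴴ * (U * Epauli q a * Uᴴ)) := by
    intro p
    rw [pauliTransfer, map_mul, map_inv₀, Complex.conj_natCast, starRingEnd_apply,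
      ← trace_conjTranspose]
    simp only [conjTranspose_mul, conjTranspose_conjTranspose]
    rw [trace_mul_comm]
    simp only [Matrix.mul_assoc]
  have htransfer : ∀ p, pauliTransfer q U a' p
      = (q : ℂ)⁻¹ * trace ((U * (Epauli q a')ᴴ * Uᴴ) * Epauli q p) := by
    intro p
    rw [pauliTransfer, trace_mul_comm]
    simp only [Matrix.mul_assoc]
  have hmid : U * (Epauli q a')ᴴ * Uᴴ * (U * Epauli q a * Uᴴ)
      = U * ((Epauli q a')ᴴ * Epauli q a) * Uᴴ := by
    simp only [Matrix.mul_assoc, ← Matrix.mul_assoc Uᴴ U, hUU, Matrix.one_mul]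
  calc ∑ p, conj (pauliTransfer q U a p) * pauliTransfer q U a' p
      = (q : ℂ)⁻¹ * (q : ℂ)⁻¹ * ∑ p, trace ((U * (Epauli q a')ᴴ * Uᴴ) * Epauli q p)
          * trace ((Epauli q p)ᴴ * (U * Epauli q a * Uᴴ)) := by
        rw [Finset.mul_sum]
        exact Finset.sum_congr rfl fun p _ => by rw [hconj, htransfer]; ring
    _ = (q : ℂ)⁻¹ * trace ((Epauli q a')ᴴ * Epauli q a) := by
        rw [sum_trace_mul_Epauli_mul_trace, hmid, trace_mul_cycle, hUU, Matrix.one_mul]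
        field_simp
    _ = if a = a' then 1 else 0 := by
        rw [trace_conjTranspose_Epauli_mul]
        by_cases h : a = a' <;> simp [h, hq, eq_comm]

lemma sum_conj_pauliTransfer_mul_weight {U : Matrix (Fin q) (Fin q) ℂ}
    (hU : U ∈ unitaryGroup (Fin q) ℂ) (a a' : ZMod q × ZMod q) :
    ∑ p, C (conj (pauliTransfer q U a p) * pauliTransfer q U a' p) * (if p = 0 then 1 else X)
      = if a = a' then (if a = 0 then 1 else X) else 0 := by
  have hsplit : ∀ p : ZMod q × ZMod q,
      (if p = 0 then 1 else X : ℂ[X]) = X + if p = 0 then 1 - X else 0 := by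
    intro p; split_ifs <;> ring
  simp only [hsplit, mul_add, Finset.sum_add_distrib, mul_ite, mul_zero, Finset.sum_ite_eq',
    Finset.mem_univ, if_true, ← Finset.sum_mul, ← map_sum, sum_conj_pauliTransfer_mul hU,
    pauliTransfer_zero_right hU]
  by_cases h : a = a'
  · subst h; by_cases h0 : a = 0 <;> simp [h0]
  · rcases eq_or_ne a 0 with rfl | h0
    · simp [h, Ne.symm h]
    · simp [h, h0]

end Transfer

section Kron
variable {q : ℕ} {ι : Type} [Fintype ι]

lemma kron_mul [DecidableEq ι] (A B : ι → Matrix (Fin q) (Fin q) ℂ) :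
    kron q A * kron q B = kron q fun i => A i * B i := by
  ext v w
  simp only [kron, mul_apply, Finset.prod_univ_sum, Fintype.piFinset_univ,
    ← Finset.prod_mul_distrib]

lemma kron_conjTranspose (A : ι → Matrix (Fin q) (Fin q) ℂ) :
    (kron q A)ᴴ = kron q fun i => (A i)ᴴ := by
  ext v w
  exact star_prod _ _

lemma trace_kron [DecidableEq ι] (A : ι → Matrix (Fin q) (Fin q) ℂ) :
    trace (kron q A) = ∏ i, trace (A i) := by
  simp only [trace, diag, kron, Finset.prod_univ_sum, Fintype.piFinset_univ]

lemma cCoef_kron [DecidableEq ι] (V : ι → Matrix (Fin q) (Fin q) ℂ) (g e : ι → ZMod q × ZMod q) :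
    cCoef q (kron q V) g e = ∏ i, pauliTransfer q (V i) (g i) (e i) := by
  have hEV : ∀ p : ι → ZMod q × ZMod q, EV q p = kron q fun i => Epauli q (p i) := fun _ => rfl
  rw [cCoef, hEV, hEV, kron_conjTranspose, kron_conjTranspose, kron_mul, kron_mul, kron_mul,
    trace_kron]
  simp only [pauliTransfer, Finset.prod_mul_distrib, Finset.prod_const, Finset.card_univ, inv_pow]

lemma X_pow_wtL (e : ι → ZMod q × ZMod q) :
    (X : ℂ[X]) ^ wtL q e = ∏ i, if e i = 0 then 1 else X := by
  rw [Finset.prod_ite, wtL]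
  simp

end Kron

lemma sum_conj_cCoef_kron_mul_weight {q : ℕ} [NeZero q] {ι : Type} [Fintype ι] [DecidableEq ι]
    {V : ι → Matrix (Fin q) (Fin q) ℂ} (hV : ∀ i, V i ∈ unitaryGroup (Fin q) ℂ)
    (a a' : ι → ZMod q × ZMod q) :
    ∑ e, C (conj (cCoef q (kron q V) a e) * cCoef q (kron q V) a' e) * X ^ wtL q e
      = if a = a' then X ^ wtL q a else 0 := by
  simp only [cCoef_kron, X_pow_wtL, map_prod, ← Finset.prod_mul_distrib]
  rw [← Fintype.prod_sum (fun i p => C (conj (pauliTransfer q (V i) (a i) p)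
    * pauliTransfer q (V i) (a' i) p) * (if p = 0 then 1 else X))]
  simp only [sum_conj_pauliTransfer_mul_weight (hV _), Finset.prod_ite_zero, Finset.mem_univ,
    forall_const]
  exact if_congr funext_iff.symm rfl rfl

section Glue
variable {ι : Type} [DecidableEq ι] {J K : Finset ι} {α : Type*}

-- `glue f e` is the label `f ⊗_K e` of the weighted trace.
def glue (f : {j // j ∈ K} → α) (e : {j // j ∈ J \ K} → α) : {j // j ∈ J} → α :=
  fun j => if h : j.val ∈ K then f ⟨j.val, h⟩ else e ⟨j.val, Finset.mem_sdiff.mpr ⟨j.2, h⟩⟩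

def sumSdiffEquiv (hKJ : K ⊆ J) : {j // j ∈ K} ⊕ {j // j ∈ J \ K} ≃ {j // j ∈ J} :=
  (Equiv.Finset.union K (J \ K) Finset.disjoint_sdiff).trans
    (Equiv.subtypeEquivRight fun j => by rw [Finset.union_sdiff_of_subset hKJ])

@[simp]
lemma glue_sumSdiffEquiv_inl (hKJ : K ⊆ J) (f : {j // j ∈ K} → α) (e : {j // j ∈ J \ K} → α)
    (k : {j // j ∈ K}) : glue f e (sumSdiffEquiv hKJ (.inl k)) = f k :=
  dif_pos k.2

@[simp]
lemma glue_sumSdiffEquiv_inr (hKJ : K ⊆ J) (f : {j // j ∈ K} → α) (e : {j // j ∈ J \ K} → α)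
    (r : {j // j ∈ J \ K}) : glue f e (sumSdiffEquiv hKJ (.inr r)) = e r :=
  dif_neg (Finset.mem_sdiff.mp r.2).2

def glueEquiv (hKJ : K ⊆ J) :
    (({j // j ∈ K} → α) × ({j // j ∈ J \ K} → α)) ≃ ({j // j ∈ J} → α) where
  toFun p := glue p.1 p.2
  invFun g := (fun k => g (sumSdiffEquiv hKJ (.inl k)), fun r => g (sumSdiffEquiv hKJ (.inr r)))
  left_inv p := by simp
  right_inv g := by
    funext j
    obtain ⟨x, rfl⟩ := (sumSdiffEquiv hKJ).surjective j
    cases x <;> simp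

lemma sum_glue {M : Type*} [AddCommMonoid M] [Fintype α] (hKJ : K ⊆ J)
    (F : ({j // j ∈ J} → α) → M) :
    ∑ g, F g = ∑ f : {j // j ∈ K} → α, ∑ e : {j // j ∈ J \ K} → α, F (glue f e) := by
  rw [← Fintype.sum_prod_type', ← (glueEquiv hKJ).sum_comp]
  rfl

lemma prod_glue {β : Type*} [CommMonoid β] (hKJ : K ⊆ J) (G : ι → α → α → β)
    (f f' : {j // j ∈ K} → α) (e e' : {j // j ∈ J \ K} → α) :
    ∏ j : {j // j ∈ J}, G j (glue f e j) (glue f' e' j)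
      = (∏ k : {j // j ∈ K}, G k (f k) (f' k)) * ∏ r : {j // j ∈ J \ K}, G r (e r) (e' r) := by
  rw [← (sumSdiffEquiv hKJ).prod_comp, Fintype.prod_sum_type]
  simp only [glue_sumSdiffEquiv_inl, glue_sumSdiffEquiv_inr]
  rfl

end Glue

lemma sum_weight_mul_sum_contract {R : Type*} [CommSemiring R] {A B E : Type*} [Fintype A]
    [Fintype B] [Fintype E] [DecidableEq B] (w : E → R) (σ : B → R) (ρ : B → B → E → R)
    (hρ : ∀ b b', ∑ c, ρ b b' c * w c = if b = b' then σ b else 0)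
    (κ : A → A → R) (t : A → B → A → B → R) :
    ∑ c, w c * ∑ a, ∑ b, ∑ a', ∑ b', κ a a' * ρ b b' c * t a b a' b'
      = ∑ a, ∑ a', κ a a' * ∑ b, σ b * t a b a' b := by
  have hc : ∀ a a' b b', ∑ c, w c * (κ a a' * ρ b b' c * t a b a' b')
      = if b = b' then κ a a' * (σ b * t a b a' b) else 0 := by
    intro a a' b b'
    calc ∑ c, w c * (κ a a' * ρ b b' c * t a b a' b')
        = κ a a' * (∑ c, ρ b b' c * w c) * t a b a' b' := by
          rw [Finset.mul_sum, Finset.sum_mul]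
          exact Finset.sum_congr rfl fun c _ => by ring
      _ = _ := by
          rw [hρ]
          split_ifs with h
          · subst h; ring
          · simp
  simp only [Finset.mul_sum]
  rw [Finset.sum_comm]
  refine Finset.sum_congr rfl fun a _ => ?_
  rw [Finset.sum_comm, Finset.sum_comm (s := Finset.univ (α := A))]
  refine Finset.sum_congr rfl fun b _ => ?_
  rw [Finset.sum_comm]
  refine Finset.sum_congr rfl fun a' _ => ?_
  rw [Finset.sum_comm]
  simp only [hc, Finset.sum_ite_eq, Finset.mem_univ, if_true]

section Trace
variable {q : ℕ} {ι : Type} [DecidableEq ι] {J K : Finset ι}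

lemma trJK_apply [NeZero q] [Fintype ι] (hKJ : K ⊆ J)
    (T : ({j // j ∈ J} → ZMod q × ZMod q) → ({j // j ∈ J} → ZMod q × ZMod q) → ℂ[X])
    (f f' : {j // j ∈ K} → ZMod q × ZMod q) :
    trJK q K hKJ T f f' = ∑ e, X ^ wtL q e * T (glue f e) (glue f' e) :=
  rfl

lemma cCoef_kron_glue (hKJ : K ⊆ J) (V : ι → Matrix (Fin q) (Fin q) ℂ)
    (a f : {j // j ∈ K} → ZMod q × ZMod q) (b c : {j // j ∈ J \ K} → ZMod q × ZMod q) :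
    cCoef q (kron q fun j : {j // j ∈ J} => V j) (glue a b) (glue f c)
      = cCoef q (kron q fun j : {j // j ∈ K} => V j) a f
        * cCoef q (kron q fun j : {j // j ∈ J \ K} => V j) b c := by
  simp only [cCoef_kron]
  exact prod_glue hKJ (fun j => pauliTransfer q (V j)) a f b c

lemma Lam_kron_glue [NeZero q] (hKJ : K ⊆ J) (V : ι → Matrix (Fin q) (Fin q) ℂ)
    (T : ({j // j ∈ J} → ZMod q × ZMod q) → ({j // j ∈ J} → ZMod q × ZMod q) → ℂ[X])
    (f f' : {j // j ∈ K} → ZMod q × ZMod q) (c : {j // j ∈ J \ K} → ZMod q × ZMod q) :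
    Lam q (kron q fun j : {j // j ∈ J} => V j) T (glue f c) (glue f' c)
      = ∑ a, ∑ b, ∑ a', ∑ b',
          C (conj (cCoef q (kron q fun j : {j // j ∈ K} => V j) a f)
            * cCoef q (kron q fun j : {j // j ∈ K} => V j) a' f')
          * C (conj (cCoef q (kron q fun j : {j // j ∈ J \ K} => V j) b c)
            * cCoef q (kron q fun j : {j // j ∈ J \ K} => V j) b' c)
          * T (glue a b) (glue a' b') := by
  rw [Lam, sum_glue hKJ]
  refine Finset.sum_congr rfl fun a _ => Finset.sum_congr rfl fun b _ => ?_
  rw [sum_glue hKJ]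
  refine Finset.sum_congr rfl fun a' _ => Finset.sum_congr rfl fun b' _ => ?_
  rw [cCoef_kron_glue hKJ, cCoef_kron_glue hKJ]
  simp only [map_mul]
  ring

end Trace

theorem stmt13_general (q n : ℕ) [NeZero q]
    (Us : Fin n → Matrix (Fin q) (Fin q) ℂ)
    (hU : ∀ j, Us j ∈ Matrix.unitaryGroup (Fin q) ℂ)
    (J K : Finset (Fin n)) (hKJ : K ⊆ J)
    (T : ({j // j ∈ J} → ZMod q × ZMod q) → ({j // j ∈ J} → ZMod q × ZMod q) →
      Polynomial ℂ) :
    Lam q (kron q fun j : {j // j ∈ K} => Us j.val) (trJK q K hKJ T) =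
      trJK q K hKJ (Lam q (kron q fun j : {j // j ∈ J} => Us j.val) T) := by
  funext f f'
  rw [trJK_apply]
  simp only [Lam_kron_glue hKJ]
  rw [sum_weight_mul_sum_contract _ _ _
    (sum_conj_cCoef_kron_mul_weight (V := fun j : {j // j ∈ J \ K} => Us j) fun j => hU j)]
  simp only [Lam, trJK_apply, Finset.mul_sum]

/-- Compatibility of the weighted trace with the local unitary action:
`Λ(U_K) ∘ tr^J_K = tr^J_K ∘ Λ(U_J)`. -/
theorem stmt13 (q n : ℕ) [NeZero q] (hq : 2 ≤ q) (hn : 1 ≤ n)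
    (Us : Fin n → Matrix (Fin q) (Fin q) ℂ)
    (hU : ∀ j, Us j ∈ Matrix.unitaryGroup (Fin q) ℂ)
    (J K : Finset (Fin n)) (hKJ : K ⊆ J) (hne : K ≠ J)
    (T : ({j // j ∈ J} → ZMod q × ZMod q) → ({j // j ∈ J} → ZMod q × ZMod q) →
      Polynomial ℂ) :
    Lam q (kron q fun j : {j // j ∈ K} => Us j.val) (trJK q K hKJ T) =
      trJK q K hKJ (Lam q (kron q fun j : {j // j ∈ J} => Us j.val) T) :=
  stmt13_general q n Us hU J K hKJ T
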